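/- arXiv:1603.03741 — 2 statements merged into one kernel-verified Lean document; each statement's English description precedes it below -/
import Mathlib

section
/- If G is a nuciferous graph on at least three vertices, then G has no vertex of degree one. -/
open Matrix SimpleGraph

/-- A simple graph is *nuciferous* if its 0-1 adjacency matrix is invertible,
all diagonal entries of the inverse are zero, and all off-diagonal entries of
the inverse are nonzero. -/
def Nuciferous {V : Type*} [Fintype V] [DecidableEq V] (G : SimpleGraph V)
    [DecidableRel G.Adj] : Prop :=
  IsUnit (G.adjMatrix ℚ) ∧ (∀ i, (G.adjMatrix ℚ)⁻¹ i i = 0) ∧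
    ∀ i j, i ≠ j → (G.adjMatrix ℚ)⁻¹ i j ≠ 0

theorem nuciferous_no_degree_one {V : Type*} [Fintype V] [DecidableEq V]
    (G : SimpleGraph V) [DecidableRel G.Adj] (hcard : 3 ≤ Fintype.card V)
    (h : Nuciferous G) : ∀ v : V, G.degree v ≠ 1 := by
  obtain ⟨hU, hdiag, hoff⟩ := h
  intro v hdeg
  rw [SimpleGraph.degree, Finset.card_eq_one] at hdeg
  obtain ⟨u, hu⟩ := hdeg
  have hmul : G.adjMatrix ℚ * (G.adjMatrix ℚ)⁻¹ = 1 := Matrix.mul_nonsing_inv _ ((Matrix.isUnit_iff_isUnit_det _).mp hU)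
  have key : ∀ j, (G.adjMatrix ℚ)⁻¹ u j = (1 : Matrix V V ℚ) v j := by
    intro j
    rw [← hmul, SimpleGraph.adjMatrix_mul_apply, hu, Finset.sum_singleton]
  have huv : u ≠ v := by
    have := G.ne_of_adj (G.mem_neighborFinset v u |>.mp (hu ▸ Finset.mem_singleton_self u))
    exact this.symm
  -- find j distinct from u and v
  have : ({u, v} : Finset V).card < Fintype.card V := by
    calc ({u, v} : Finset V).card ≤ 2 := Finset.card_insert_le _ _ |>.trans (by simp)
    _ < Fintype.card V := by omega
  have hne : ({u, v} : Finset V) ≠ Finset.univ := fun e => by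
    rw [e, Finset.card_univ] at this; omega
  obtain ⟨j, -, hj⟩ := Finset.exists_of_ssubset (Finset.ssubset_univ_iff.mpr hne)
  simp only [Finset.mem_insert, Finset.mem_singleton, not_or] at hj
  have hz : (G.adjMatrix ℚ)⁻¹ u j = 0 := by
    rw [key j, Matrix.one_apply_ne (fun hvj => hj.2 hvj.symm)]
  exact hoff u j (fun huj => hj.1 huj.symm) hz
end

section
/- There exists a nuciferous graph on more than 2 vertices; concretely, the 7-regular Cayley graph on 24 vertices whose adjacency matrix A is given explicitly (Table 2 of the paper) is nuciferous: A is invertible, all diagonal entries of A⁻¹ are zero, and all off-diagonal entries of A⁻¹ are nonzero. In particular, K₂ is not the only nuciferous graph. -/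
open Matrix SimpleGraph

/-- The adjacency matrix of the nuciferous Cayley graph on 24 vertices
from Table 2 of the paper. -/
def A24 : Matrix (Fin 24) (Fin 24) ℚ :=
  !![0, 1, 1, 1, 1, 1, 1, 1, 0, 0, 0, 0, 0, 0, 0, 0, 0, 0, 0, 0, 0, 0, 0, 0;
    1, 0, 1, 1, 0, 0, 0, 0, 0, 0, 0, 0, 1, 1, 0, 0, 0, 0, 0, 0, 1, 1, 0, 0;
    1, 1, 0, 1, 0, 0, 0, 0, 1, 0, 1, 0, 0, 0, 1, 0, 0, 0, 1, 0, 0, 0, 0, 0;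
    1, 1, 1, 0, 0, 0, 0, 0, 0, 1, 0, 1, 0, 0, 0, 1, 0, 0, 0, 1, 0, 0, 0, 0;
    1, 0, 0, 0, 0, 1, 0, 0, 0, 1, 0, 1, 0, 0, 1, 0, 0, 1, 0, 0, 1, 0, 0, 0;
    1, 0, 0, 0, 1, 0, 0, 0, 1, 0, 1, 0, 0, 0, 0, 1, 1, 0, 0, 0, 0, 1, 0, 0;
    1, 0, 0, 0, 0, 0, 0, 0, 0, 1, 0, 1, 1, 1, 0, 0, 1, 0, 1, 0, 0, 0, 0, 0;
    1, 0, 0, 0, 0, 0, 0, 0, 1, 0, 1, 0, 1, 1, 0, 0, 0, 1, 0, 1, 0, 0, 0, 0;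
    0, 0, 1, 0, 0, 1, 0, 1, 0, 1, 0, 0, 0, 1, 0, 0, 0, 0, 0, 1, 0, 0, 1, 0;
    0, 0, 0, 1, 1, 0, 1, 0, 1, 0, 0, 0, 1, 0, 0, 0, 0, 0, 1, 0, 0, 0, 1, 0;
    0, 0, 1, 0, 0, 1, 0, 1, 0, 0, 0, 0, 0, 0, 1, 1, 0, 0, 0, 0, 0, 1, 0, 1;
    0, 0, 0, 1, 1, 0, 1, 0, 0, 0, 0, 0, 0, 0, 1, 1, 0, 0, 0, 0, 1, 0, 0, 1;
    0, 1, 0, 0, 0, 0, 1, 1, 0, 1, 0, 0, 0, 0, 1, 0, 0, 1, 1, 0, 0, 0, 0, 0;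
    0, 1, 0, 0, 0, 0, 1, 1, 1, 0, 0, 0, 0, 0, 0, 1, 1, 0, 0, 1, 0, 0, 0, 0;
    0, 0, 1, 0, 1, 0, 0, 0, 0, 0, 1, 1, 1, 0, 0, 0, 0, 0, 0, 0, 1, 0, 1, 0;
    0, 0, 0, 1, 0, 1, 0, 0, 0, 0, 1, 1, 0, 1, 0, 0, 0, 0, 0, 0, 0, 1, 1, 0;
    0, 0, 0, 0, 0, 1, 1, 0, 0, 0, 0, 0, 0, 1, 0, 0, 0, 1, 0, 0, 1, 0, 1, 1;
    0, 0, 0, 0, 1, 0, 0, 1, 0, 0, 0, 0, 1, 0, 0, 0, 1, 0, 0, 0, 0, 1, 1, 1;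
    0, 0, 1, 0, 0, 0, 1, 0, 0, 1, 0, 0, 1, 0, 0, 0, 0, 0, 0, 1, 1, 0, 0, 1;
    0, 0, 0, 1, 0, 0, 0, 1, 1, 0, 0, 0, 0, 1, 0, 0, 0, 0, 1, 0, 0, 1, 0, 1;
    0, 1, 0, 0, 1, 0, 0, 0, 0, 0, 0, 1, 0, 0, 1, 0, 1, 0, 1, 0, 0, 1, 0, 0;
    0, 1, 0, 0, 0, 1, 0, 0, 0, 0, 1, 0, 0, 0, 0, 1, 0, 1, 0, 1, 1, 0, 0, 0;
    0, 0, 0, 0, 0, 0, 0, 0, 1, 1, 0, 0, 0, 0, 1, 1, 1, 1, 0, 0, 0, 0, 0, 1;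
    0, 0, 0, 0, 0, 0, 0, 0, 0, 0, 1, 1, 0, 0, 0, 0, 1, 1, 1, 1, 0, 0, 1, 0]

/-!
The inverse is known explicitly: `21 • A24⁻¹` is an integer matrix with zero diagonal and nonzero
off-diagonal entries, so everything reduces to the identity `A24 * (21 • A24⁻¹) = 21 • 1`, which the
kernel checks by evaluation.
-/

theorem Matrix.IsAdjMatrix.adjMatrix_toGraph {V α : Type*} [MulZeroOneClass α] [Nontrivial α]
    [DecidableEq α] {A : Matrix V V α} (h : A.IsAdjMatrix) : h.toGraph.adjMatrix α = A := by
  ext i j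
  rcases h.zero_or_one i j with hij | hij <;> simp [adjMatrix_apply, hij]

theorem SimpleGraph.nuciferous_of_mul_eq_smul_one {V : Type*} [Fintype V] [DecidableEq V]
    (G : SimpleGraph V) [DecidableRel G.Adj] {B : Matrix V V ℚ} {c : ℚ} (hc : c ≠ 0)
    (hB : G.adjMatrix ℚ * B = c • 1) (hdiag : ∀ i, B i i = 0)
    (hoff : ∀ i j, i ≠ j → B i j ≠ 0) : Nuciferous G := by
  have hright : G.adjMatrix ℚ * (c⁻¹ • B) = 1 := by
    rw [Matrix.mul_smul, hB, smul_smul, inv_mul_cancel₀ hc, one_smul]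
  have hinv : (G.adjMatrix ℚ)⁻¹ = c⁻¹ • B := Matrix.inv_eq_right_inv hright
  refine ⟨?_, fun i => ?_, fun i j hij => ?_⟩
  · exact (Matrix.isUnit_iff_isUnit_det _).mpr (Matrix.isUnit_det_of_right_inverse hright)
  · simp [hinv, hdiag]
  · simp [hinv, hc, hoff i j hij]

/-- `21 • A24⁻¹`, from Table 2 of the paper. -/
def B24 : Matrix (Fin 24) (Fin 24) ℚ :=
  !![0, 1, 5, 5, 4, 4, 1, 1, -1, -1, 1, 1, -1, -1, -4, -4, 4, 4, -2, -2, -4, -4, -6, 2;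
    1, 0, 5, 5, -4, -4, -1, -1, -2, -2, -4, -4, 1, 1, 1, 1, 4, 4, -1, -1, 4, 4, 2, -6;
    5, 5, 0, 1, -4, 1, -2, -1, 1, -1, 4, -4, -1, -2, 4, -4, 2, -6, 1, -1, 1, -4, 4, 4;
    5, 5, 1, 0, 1, -4, -1, -2, -1, 1, -4, 4, -2, -1, -4, 4, -6, 2, -1, 1, -4, 1, 4, 4;
    4, -4, -4, 1, 0, 4, -1, 4, 4, 1, -4, 5, -1, -6, 1, -4, -1, 1, -2, 2, 5, 1, -1, -2;
    4, -4, 1, -4, 4, 0, 4, -1, 1, 4, 5, -4, -6, -1, -4, 1, 1, -1, 2, -2, 1, 5, -1, -2;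
    1, -1, -2, -1, -1, 4, 0, 1, -4, 1, 2, 1, 5, 4, -2, 4, 4, -4, 5, -4, -1, -6, -4, 1;
    1, -1, -1, -2, 4, -1, 1, 0, 1, -4, 1, 2, 4, 5, 4, -2, -4, 4, -4, 5, -6, -1, -4, 1;
    -1, -2, 1, -1, 4, 1, -4, 1, 0, 4, -1, -6, -4, 5, 4, -1, 1, -4, 1, 5, 2, -2, 4, -4;
    -1, -2, -1, 1, 1, 4, 1, -4, 4, 0, -6, -1, 5, -4, -1, 4, -4, 1, 5, 1, -2, 2, 4, -4;
    1, -4, 4, -4, -4, 5, 2, 1, -1, -6, 0, 1, 4, -2, 4, 5, -2, -1, 4, -1, -4, 1, -1, 1;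
    1, -4, -4, 4, 5, -4, 1, 2, -6, -1, 1, 0, -2, 4, 5, 4, -1, -2, -1, 4, 1, -4, -1, 1;
    -1, 1, -1, -2, -1, -6, 5, 4, -4, 5, 4, -2, 0, 1, 1, 2, -4, 4, 1, -4, -1, 4, 1, -4;
    -1, 1, -2, -1, -6, -1, 4, 5, 5, -4, -2, 4, 1, 0, 2, 1, 4, -4, -4, 1, 4, -1, 1, -4;
    -4, 1, 4, -4, 1, -4, -2, 4, 4, -1, 4, 5, 1, 2, 0, 1, -2, -1, -1, -6, 5, -4, 1, -1;
    -4, 1, -4, 4, -4, 1, 4, -2, -1, 4, 5, 4, 2, 1, 1, 0, -1, -2, -6, -1, -4, 5, 1, -1;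
    4, 4, 2, -6, -1, 1, 4, -4, 1, -4, -2, -1, -4, 4, -2, -1, 0, 1, 1, -4, 1, -1, 5, 5;
    4, 4, -6, 2, 1, -1, -4, 4, -4, 1, -1, -2, 4, -4, -1, -2, 1, 0, -4, 1, -1, 1, 5, 5;
    -2, -1, 1, -1, -2, 2, 5, -4, 1, 5, 4, -1, 1, -4, -1, -6, 1, -4, 0, 4, 1, 4, -4, 4;
    -2, -1, -1, 1, 2, -2, -4, 5, 5, 1, -1, 4, -4, 1, -6, -1, -4, 1, 4, 0, 4, 1, -4, 4;
    -4, 4, 1, -4, 5, 1, -1, -6, 2, -2, -4, 1, -1, 4, 5, -4, 1, -1, 1, 4, 0, 4, -2, -1;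
    -4, 4, -4, 1, 1, 5, -6, -1, -2, 2, 1, -4, 4, -1, -4, 5, -1, 1, 4, 1, 4, 0, -2, -1;
    -6, 2, 4, 4, -1, -1, -4, -4, 4, 4, -1, -1, 1, 1, 1, 1, 5, 5, -4, -4, -2, -2, 0, 1;
    2, -6, 4, 4, -2, -2, 1, 1, -4, -4, 1, 1, -4, -4, -1, -1, 5, 5, 4, 4, -1, -1, 1, 0]

theorem isAdjMatrix_A24 : A24.IsAdjMatrix :=
  isAdjMatrix_iff_hadamard.mpr (by decide +kernel)

theorem A24_mul_B24 : A24 * B24 = 21 • 1 := by decide +kernel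

theorem B24_diag : ∀ i, B24 i i = 0 := by decide +kernel

-- Stated through `of.symm`, which exposes the function type: instance search cannot see through
-- `Matrix` to decide the nested `∀` directly.
theorem B24_ne_zero_of_ne : ∀ i j, i ≠ j → B24 i j ≠ 0 :=
  (by decide +kernel : ∀ i j, i ≠ j → of.symm B24 i j ≠ 0)

theorem exists_nontrivial_nuciferous :
    ∃ (G : SimpleGraph (Fin 24)) (_ : DecidableRel G.Adj),
      G.adjMatrix ℚ = A24 ∧ Nuciferous G := by
  have hA := isAdjMatrix_A24.adjMatrix_toGraph
  refine ⟨isAdjMatrix_A24.toGraph, inferInstance, hA, ?_⟩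
  exact nuciferous_of_mul_eq_smul_one _ (by norm_num) (hA ▸ A24_mul_B24) B24_diag
    B24_ne_zero_of_ne
end
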